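/- arXiv:1402.6364 — 5 statements merged into one kernel-verified Lean document; each statement's English description precedes it below -/
import Mathlib

section
/- Let A, B, C be Polish spaces, μ₁ ∈ P(A × B) and μ₂ ∈ P(B × C) with equal B-marginals. Suppose there exists a Borel measurable function h₁ : B → A such that μ₁(A' × B') = ∫_{B'} δ_{h₁(b)}(A') dμ₁^B(b) for all Borel sets A' ⊆ A, B' ⊆ B (i.e., μ₁ is supported on the graph of h₁). Then the measure μ₀ on A × B × C with marginals μ₁ on A × B and μ₂ on B × C is unique. -/
open MeasureTheory Filter Topology

theorem stmt2 {A B C : Type*}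
    [MeasurableSpace A] [TopologicalSpace A] [PolishSpace A] [BorelSpace A]
    [MeasurableSpace B] [TopologicalSpace B] [PolishSpace B] [BorelSpace B]
    [MeasurableSpace C] [TopologicalSpace C] [PolishSpace C] [BorelSpace C]
    (μ₁ : Measure (A × B)) (μ₂ : Measure (B × C))
    [IsProbabilityMeasure μ₁] [IsProbabilityMeasure μ₂]
    (hcons : μ₁.map Prod.snd = μ₂.map Prod.fst)
    (h₁ : B → A) (hmeas : Measurable h₁)
    (hgraph : ∀ s t : Set _, MeasurableSet s → MeasurableSet t →
      μ₁ (s ×ˢ t) = ∫⁻ b in t, Measure.dirac (h₁ b) s ∂(μ₁.map Prod.snd))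
    (ν ν' : Measure (A × B × C))
    [IsProbabilityMeasure ν] [IsProbabilityMeasure ν']
    (hν₁ : ν.map (fun p => (p.1, p.2.1)) = μ₁) (hν₂ : ν.map Prod.snd = μ₂)
    (hν'₁ : ν'.map (fun p => (p.1, p.2.1)) = μ₁) (hν'₂ : ν'.map Prod.snd = μ₂) :
    ν = ν' := by
  set β : Measure B := μ₁.map Prod.snd with hβ
  have hβprob : IsProbabilityMeasure β :=
    Measure.isProbabilityMeasure_map measurable_snd.aemeasurable
  -- e : B → A × B, graph map
  set e : B → A × B := fun b => (h₁ b, b) with he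
  have hemeas : Measurable e := hmeas.prodMk measurable_id
  -- μ₁ = β.map e
  have hμ₁ : μ₁ = β.map e := by
    refine MeasureTheory.ext_of_generate_finite _ generateFrom_prod.symm isPiSystem_prod ?_ ?_
    · rintro S ⟨s, hs, t, ht, rfl⟩
      simp only [Set.mem_setOf_eq] at hs ht
      rw [hgraph s t hs ht, Measure.map_apply hemeas (hs.prod ht)]
      have : e ⁻¹' (s ×ˢ t) = t ∩ h₁ ⁻¹' s := by
        ext b; simp [he, Set.mem_prod, and_comm]
      rw [this]
      calc ∫⁻ b in t, Measure.dirac (h₁ b) s ∂β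
          = ∫⁻ b in t, (h₁ ⁻¹' s).indicator 1 b ∂β := by
            refine lintegral_congr fun b => ?_
            rw [Measure.dirac_apply' _ hs]
            by_cases hb : h₁ b ∈ s <;> simp [hb]
        _ = β (t ∩ h₁ ⁻¹' s) := by
            rw [lintegral_indicator_one (hmeas hs),
              Measure.restrict_apply (hmeas hs), Set.inter_comm]
    · rw [Measure.map_apply hemeas MeasurableSet.univ]; simp
  -- ν-a.e., p.1 = h₁ p.2.1
  have key : ∀ (ρ : Measure (A × B × C)), IsProbabilityMeasure ρ →
      ρ.map (fun p => (p.1, p.2.1)) = μ₁ → ρ.map Prod.snd = μ₂ →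
      ρ = μ₂.map (fun q => (h₁ q.1, q)) := by
    intro ρ hρ hρ₁ hρ₂
    have hπ : Measurable fun p : A × B × C => (p.1, p.2.1) :=
      measurable_fst.prodMk (measurable_fst.comp measurable_snd)
    have hsetm : MeasurableSet {q : A × B | q.1 = h₁ q.2} :=
      measurable_fst.stronglyMeasurable.measurableSet_eq_fun
        (hmeas.comp measurable_snd).stronglyMeasurable
    have hne : MeasurableSet {q : A × B | q.1 ≠ h₁ q.2} := hsetm.compl
    have hμ₁graph : μ₁ {q : A × B | q.1 ≠ h₁ q.2} = 0 := by
      have hemp : e ⁻¹' {q : A × B | q.1 ≠ h₁ q.2} = ∅ := by ext b; simp [he]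
      rw [hμ₁, Measure.map_apply hemeas hne, hemp, measure_empty]
    have hae : ∀ᵐ p ∂ρ, p.1 = h₁ p.2.1 := by
      rw [ae_iff]
      have : {p : A × B × C | ¬ p.1 = h₁ p.2.1}
          = (fun p : A × B × C => (p.1, p.2.1)) ⁻¹' {q : A × B | q.1 ≠ h₁ q.2} := rfl
      rw [this, ← Measure.map_apply hπ hne, hρ₁]
      exact hμ₁graph
    have hfeq : (fun p : A × B × C => (h₁ p.2.1, p.2)) =ᵐ[ρ] id := by
      filter_upwards [hae] with p hp
      simp [← hp]
    calc ρ = ρ.map id := (Measure.map_id).symm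
      _ = ρ.map (fun p : A × B × C => (h₁ p.2.1, p.2)) :=
          (Measure.map_congr hfeq).symm
      _ = (ρ.map Prod.snd).map (fun q : B × C => (h₁ q.1, q)) := by
          rw [Measure.map_map (show Measurable fun q : B × C => (h₁ q.1, q) from
            (hmeas.comp measurable_fst).prodMk measurable_id) measurable_snd]
          rfl
      _ = μ₂.map (fun q => (h₁ q.1, q)) := by rw [hρ₂]
  rw [key ν ‹_› hν₁ hν₂, key ν' ‹_› hν'₁ hν'₂]
end

section
/- Let X, Y, Z be Polish spaces and let M̃ be a tight set of consistent measure pairs (μ, ν) ∈ P(X × Y) × P(Y × Z) (i.e., both coordinate families are uniformly tight and the Y-marginals agree). Then the image of M̃ under the gluing map χ₁ (defined by χ₁(μ,ν)(X'×Y'×Z') = ∫_{Y'×Z'} μ(X'|y) ν(dy,dz)) is a tight family of probability measures on X × Y × Z. -/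
open MeasureTheory ProbabilityTheory Filter Topology

/-- `κ` is a disintegration of `μ ∈ P(X × Y)` with respect to the second coordinate. -/
def IsDisintegrationSnd {X Y : Type*} [MeasurableSpace X] [MeasurableSpace Y]
    (μ : Measure (X × Y)) (κ : Kernel Y X) : Prop :=
  ∀ s t : Set _, MeasurableSet s → MeasurableSet t →
    μ (s ×ˢ t) = ∫⁻ y in t, κ y s ∂(μ.map Prod.snd)

/-- A family of measures is (uniformly) tight. -/
def TightFamily {Ω : Type*} [TopologicalSpace Ω] [MeasurableSpace Ω] {ι : Type*}
    (μ : ι → Measure Ω) : Prop :=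
  ∀ ε : ENNReal, 0 < ε → ∃ K : Set Ω, IsCompact K ∧ ∀ i, μ i Kᶜ < ε

theorem stmt4 {X Y Z : Type*}
    [MeasurableSpace X] [TopologicalSpace X] [PolishSpace X] [BorelSpace X]
    [MeasurableSpace Y] [TopologicalSpace Y] [PolishSpace Y] [BorelSpace Y]
    [MeasurableSpace Z] [TopologicalSpace Z] [PolishSpace Z] [BorelSpace Z]
    {ι : Type*} (μ : ι → Measure (X × Y)) (ν : ι → Measure (Y × Z))
    [∀ i, IsProbabilityMeasure (μ i)] [∀ i, IsProbabilityMeasure (ν i)]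
    (hcons : ∀ i, (μ i).map Prod.snd = (ν i).map Prod.fst)
    (htightμ : TightFamily μ) (htightν : TightFamily ν)
    (κ : ι → Kernel Y X) [∀ i, IsMarkovKernel (κ i)]
    (hκ : ∀ i, IsDisintegrationSnd (μ i) (κ i))
    (χ : ι → Measure (X × Y × Z)) [∀ i, IsProbabilityMeasure (χ i)]
    (hχ : ∀ i, ∀ s t u : Set _, MeasurableSet s → MeasurableSet t → MeasurableSet u →
      χ i (s ×ˢ t ×ˢ u) = ∫⁻ p in t ×ˢ u, κ i p.1 s ∂(ν i)) :
    TightFamily χ := by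

  intro ε hε
  have hε2 : 0 < ε / 2 := ENNReal.half_pos hε.ne'
  obtain ⟨K₁, hK₁c, hK₁⟩ := htightμ (ε / 2) hε2
  obtain ⟨K₂, hK₂c, hK₂⟩ := htightν (ε / 2) hε2
  set A : Set X := Prod.fst '' K₁ with hA
  have hAc : IsCompact A := hK₁c.image continuous_fst
  have hAm : MeasurableSet A := hAc.isClosed.measurableSet
  have hK₂m : MeasurableSet K₂ := hK₂c.isClosed.measurableSet
  have hmap : ∀ i, (χ i).map (Prod.snd : X × Y × Z → Y × Z) = ν i := by
    intro i
    refine MeasureTheory.ext_of_generate_finite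
      (Set.image2 (· ×ˢ ·) {s : Set Y | MeasurableSet s} {t : Set Z | MeasurableSet t})
      generateFrom_prod.symm isPiSystem_prod ?_ ?_
    · rintro _ ⟨t, ht, u, hu, rfl⟩
      rw [Measure.map_apply measurable_snd (ht.prod hu)]
      have hpre : (Prod.snd : X × Y × Z → Y × Z) ⁻¹' (t ×ˢ u)
          = (Set.univ : Set X) ×ˢ t ×ˢ u := by
        ext p; simp [Set.mem_prod]
      rw [hpre, hχ i _ _ _ MeasurableSet.univ ht hu]
      have h1 : ∀ p : Y × Z, κ i p.1 Set.univ = 1 := fun p => measure_univ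
      simp only [h1]
      rw [setLIntegral_one]
    · rw [Measure.map_apply measurable_snd MeasurableSet.univ]
      simp
  have hfirst : ∀ i, χ i (Aᶜ ×ˢ (Set.univ : Set (Y × Z))) ≤ μ i K₁ᶜ := by
    intro i
    have h1 : χ i (Aᶜ ×ˢ (Set.univ : Set Y) ×ˢ (Set.univ : Set Z))
        = ∫⁻ p, κ i p.1 Aᶜ ∂(ν i) := by
      rw [hχ i _ _ _ hAm.compl MeasurableSet.univ MeasurableSet.univ,
        Set.univ_prod_univ, Measure.restrict_univ]
    have h2 : ∫⁻ p, κ i p.1 Aᶜ ∂(ν i) = ∫⁻ y, κ i y Aᶜ ∂((ν i).map Prod.fst) := by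
      rw [lintegral_map (Kernel.measurable_coe (κ i) hAm.compl) measurable_fst]
    have h3 : μ i (Aᶜ ×ˢ (Set.univ : Set Y))
        = ∫⁻ y, κ i y Aᶜ ∂((μ i).map Prod.snd) := by
      simpa using hκ i Aᶜ Set.univ hAm.compl MeasurableSet.univ
    have heq : χ i (Aᶜ ×ˢ (Set.univ : Set (Y × Z))) = μ i (Aᶜ ×ˢ (Set.univ : Set Y)) := by
      rw [h3, hcons i, ← h2, ← h1, Set.univ_prod_univ]
    rw [heq]
    refine measure_mono fun p hp hpK => ?_
    exact hp.1 ⟨p, hpK, rfl⟩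
  refine ⟨A ×ˢ K₂, hAc.prod hK₂c, fun i => ?_⟩
  have hsub : (A ×ˢ K₂)ᶜ ⊆ (Aᶜ ×ˢ (Set.univ : Set (Y × Z)))
      ∪ ((Set.univ : Set X) ×ˢ K₂ᶜ) := by
    intro p hp
    by_cases h : p.1 ∈ A
    · exact Or.inr ⟨trivial, fun h2 => hp ⟨h, h2⟩⟩
    · exact Or.inl ⟨h, trivial⟩
  have hsecond : χ i ((Set.univ : Set X) ×ˢ K₂ᶜ) = ν i K₂ᶜ := by
    have hpre : (Set.univ : Set X) ×ˢ K₂ᶜ = (Prod.snd : X × Y × Z → Y × Z) ⁻¹' K₂ᶜ := by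
      ext p; simp
    rw [hpre, ← Measure.map_apply measurable_snd hK₂m.compl, hmap i]
  calc χ i (A ×ˢ K₂)ᶜ
      ≤ χ i (Aᶜ ×ˢ (Set.univ : Set (Y × Z))) + χ i ((Set.univ : Set X) ×ˢ K₂ᶜ) :=
        le_trans (measure_mono hsub) (measure_union_le _ _)
    _ ≤ μ i K₁ᶜ + ν i K₂ᶜ := by
        rw [hsecond]; exact add_le_add (hfirst i) le_rfl
    _ < ε / 2 + ε / 2 := ENNReal.add_lt_add (hK₁ i) (hK₂ i)
    _ = ε := ENNReal.add_halves ε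
end

section
/- Let X, Y be Polish spaces. The map χ₂ : P_w(X × P_w(Y)) → P_w(X × Y), defined by χ₂(ν)(X' × Y') = ∫_{X' × P_w(Y)} ζ(Y') ν(dx, dζ), is continuous when both measure spaces carry the weak-* topology. -/
/-!
Write `κ (x, ζ) = δₓ ⊗ ζ`; then `χ₂ ν = κ ∘ₘ ν`, so for bounded continuous `f` on `X × Y`,
`∫ f dχ₂ ν = ∫ g dν` with `g (x, ζ) = ∫ f d(δₓ ⊗ ζ)`. Since `x ↦ δₓ` and the product of
probability measures are weakly continuous on separable metrizable spaces, `g` is again bounded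
and continuous, so weak convergence `νₙ → ν₀` passes to `χ₂ νₙ → χ₂ ν₀`.
-/

open MeasureTheory Filter Topology BoundedContinuousFunction

instance {Ω : Type*} [MeasurableSpace Ω] : MeasurableSpace (ProbabilityMeasure Ω) :=
  Subtype.instMeasurableSpace

/-- Weak-* convergence of a sequence of measures. -/
def WeakTendsto {Ω : Type*} [MeasurableSpace Ω] [TopologicalSpace Ω]
    (μ : ℕ → Measure Ω) (μ₀ : Measure Ω) : Prop :=
  ∀ f : Ω →ᵇ ℝ, Tendsto (fun n => ∫ x, f x ∂(μ n)) atTop (𝓝 (∫ x, f x ∂μ₀))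

open ProbabilityTheory

section

variable {X Y : Type*} [MeasurableSpace X] [MeasurableSpace Y]

noncomputable def MeasureTheory.ProbabilityMeasure.toMeasureKernel : Kernel (ProbabilityMeasure Y) Y :=
  ⟨fun ζ => ζ, measurable_subtype_coe⟩

@[simp]
lemma MeasureTheory.ProbabilityMeasure.toMeasureKernel_apply (ζ : ProbabilityMeasure Y) :
    toMeasureKernel ζ = ζ :=
  rfl

instance : IsMarkovKernel (ProbabilityMeasure.toMeasureKernel (Y := Y)) :=
  ⟨fun ζ => ζ.prop⟩

/-- The kernel `(x, ζ) ↦ δₓ ⊗ ζ`; the barycenter map `χ₂` is `ν ↦ diracProdKernel ∘ₘ ν`. -/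
noncomputable def diracProdKernel : Kernel (X × ProbabilityMeasure Y) (X × Y) :=
  Kernel.id ∥ₖ ProbabilityMeasure.toMeasureKernel

instance : IsMarkovKernel (diracProdKernel (X := X) (Y := Y)) := by
  unfold diracProdKernel; infer_instance

lemma diracProdKernel_apply (p : X × ProbabilityMeasure Y) :
    diracProdKernel p = ((diracProba p.1).prod p.2 : ProbabilityMeasure (X × Y)) := by
  rw [diracProdKernel, Kernel.parallelComp_apply, Kernel.id_apply,
    ProbabilityMeasure.toMeasureKernel_apply]
  rfl

lemma diracProdKernel_apply_prod (p : X × ProbabilityMeasure Y) {s : Set X} (hs : MeasurableSet s)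
    (t : Set Y) :
    diracProdKernel p (s ×ˢ t) =
      (s ×ˢ Set.univ).indicator (fun q : X × ProbabilityMeasure Y => (q.2 : Measure Y) t) p := by
  rw [diracProdKernel, Kernel.parallelComp_apply_prod, Kernel.id_apply, Measure.dirac_apply' _ hs]
  by_cases hp : p.1 ∈ s <;> simp [hp]

lemma eq_comp_diracProdKernel {ν : Measure (X × ProbabilityMeasure Y)} [IsFiniteMeasure ν]
    {m : Measure (X × Y)}
    (hm : ∀ s t : Set _, MeasurableSet s → MeasurableSet t →
      m (s ×ˢ t) =
        ∫⁻ p in s ×ˢ (Set.univ : Set (ProbabilityMeasure Y)), (p.2 : Measure Y) t ∂ν) :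
    m = diracProdKernel ∘ₘ ν := by
  have h_prod : ∀ s t, MeasurableSet s → MeasurableSet t →
      (diracProdKernel ∘ₘ ν) (s ×ˢ t) = m (s ×ˢ t) := fun s t hs ht => by
    rw [hm s t hs ht, Measure.bind_apply (hs.prod ht) (Kernel.aemeasurable _),
      ← lintegral_indicator (hs.prod .univ)]
    simp_rw [diracProdKernel_apply_prod _ hs]
  refine (ext_of_generate_finite _ generateFrom_prod.symm isPiSystem_prod ?_ ?_).symm
  · rintro _ ⟨s, hs, t, ht, rfl⟩
    exact h_prod s t hs ht
  · simpa using h_prod _ _ .univ .univ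

lemma MeasureTheory.Measure.integral_comp {α β E : Type*} [MeasurableSpace α] [MeasurableSpace β]
    [NormedAddCommGroup E] [NormedSpace ℝ E] {μ : Measure α} {κ : Kernel α β} {f : β → E}
    (hf : Integrable f (κ ∘ₘ μ)) :
    ∫ y, f y ∂(κ ∘ₘ μ) = ∫ x, ∫ y, f y ∂κ x ∂μ := by
  rw [Measure.comp_eq_comp_const_apply] at hf ⊢
  rw [Kernel.integral_comp hf, Kernel.const_apply]

lemma continuous_diracProba_prod [TopologicalSpace X] [SecondCountableTopology X]
    [TopologicalSpace.PseudoMetrizableSpace X] [OpensMeasurableSpace X]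
    [TopologicalSpace Y] [SecondCountableTopology Y]
    [TopologicalSpace.PseudoMetrizableSpace Y] [OpensMeasurableSpace Y] :
    Continuous fun p : X × ProbabilityMeasure Y => (diracProba p.1).prod p.2 :=
  ProbabilityMeasure.continuous_prod.comp (continuous_diracProba.prodMap continuous_id)

end

noncomputable def BoundedContinuousFunction.integralAlong {Z W : Type*} [TopologicalSpace Z]
    [TopologicalSpace W] [MeasurableSpace W] [OpensMeasurableSpace W]
    (μ : C(Z, ProbabilityMeasure W)) (f : W →ᵇ ℝ) : Z →ᵇ ℝ :=
  ofNormedAddCommGroup (fun z => ∫ w, f w ∂(μ z : Measure W))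
    ((ProbabilityMeasure.continuous_integral_boundedContinuousFunction f).comp μ.continuous) ‖f‖
    fun _ => f.norm_integral_le_norm _

theorem stmt9_general {X Y : Type*}
    [MeasurableSpace X] [TopologicalSpace X] [PolishSpace X] [BorelSpace X]
    [MeasurableSpace Y] [TopologicalSpace Y] [PolishSpace Y] [BorelSpace Y]
    (ν : ℕ → Measure (X × ProbabilityMeasure Y)) (ν₀ : Measure (X × ProbabilityMeasure Y))
    [∀ n, IsProbabilityMeasure (ν n)] [IsProbabilityMeasure ν₀]
    (hν : WeakTendsto ν ν₀)
    (m : ℕ → Measure (X × Y)) (m₀ : Measure (X × Y))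
    (hm : ∀ n, ∀ s t : Set _, MeasurableSet s → MeasurableSet t →
      m n (s ×ˢ t) =
        ∫⁻ p in s ×ˢ (Set.univ : Set (ProbabilityMeasure Y)), (p.2 : Measure Y) t ∂(ν n))
    (hm₀ : ∀ s t : Set _, MeasurableSet s → MeasurableSet t →
      m₀ (s ×ˢ t) =
        ∫⁻ p in s ×ˢ (Set.univ : Set (ProbabilityMeasure Y)), (p.2 : Measure Y) t ∂ν₀) :
    WeakTendsto m m₀ := by
  intro f
  have h_integral (μ : Measure (X × ProbabilityMeasure Y)) [IsFiniteMeasure μ] :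
      ∫ z, f z ∂(diracProdKernel ∘ₘ μ) =
        ∫ p, f.integralAlong ⟨_, continuous_diracProba_prod⟩ p ∂μ := by
    rw [Measure.integral_comp (f.integrable _)]
    simp_rw [diracProdKernel_apply]
    rfl
  simp_rw [fun n => eq_comp_diracProdKernel (hm n), eq_comp_diracProdKernel hm₀, h_integral]
  exact hν _

theorem stmt9 {X Y : Type*}
    [MeasurableSpace X] [TopologicalSpace X] [PolishSpace X] [BorelSpace X]
    [MeasurableSpace Y] [TopologicalSpace Y] [PolishSpace Y] [BorelSpace Y]
    (ν : ℕ → Measure (X × ProbabilityMeasure Y)) (ν₀ : Measure (X × ProbabilityMeasure Y))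
    [∀ n, IsProbabilityMeasure (ν n)] [IsProbabilityMeasure ν₀]
    (hν : WeakTendsto ν ν₀)
    (m : ℕ → Measure (X × Y)) (m₀ : Measure (X × Y))
    [∀ n, IsProbabilityMeasure (m n)] [IsProbabilityMeasure m₀]
    (hm : ∀ n, ∀ s t : Set _, MeasurableSet s → MeasurableSet t →
      m n (s ×ˢ t) =
        ∫⁻ p in s ×ˢ (Set.univ : Set (ProbabilityMeasure Y)), (p.2 : Measure Y) t ∂(ν n))
    (hm₀ : ∀ s t : Set _, MeasurableSet s → MeasurableSet t →
      m₀ (s ×ˢ t) =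
        ∫⁻ p in s ×ˢ (Set.univ : Set (ProbabilityMeasure Y)), (p.2 : Measure Y) t ∂ν₀) :
    WeakTendsto m m₀ :=
  stmt9_general ν ν₀ hν m m₀ hm hm₀
end

section
/- Let X and Y be countable sets with the discrete topology. If a sequence {μ_n} of probability measures on X × Y converges to μ in the weak-* topology, then μ_n converges to μ in the topology of information. -/
/-!
On a countable discrete space, testing weak-* convergence against indicators gives setwise
convergence, and a Scheffé argument upgrades setwise convergence of probability weights to
`ℓ¹` convergence. Setwise convergence of `μ n` yields convergence of the `X`-marginals and, at
every atom `x` of the limiting marginal, of the conditional laws `μ n (· | x)`, which are ratios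
of masses. Integrating a bounded continuous `f` against `infoMeasure (μ n)` is the sum
`∑ x, (μ n)(x) f(x, μ n (· | x))`, and the `ℓ¹` convergence of the weights together with the
convergence of the integrands at the atoms of the limit makes these sums converge.
-/

open MeasureTheory ProbabilityTheory Filter Topology BoundedContinuousFunction

/-- The map `ψ` sending `μ ∈ P(X × Y)` to the law of `x ↦ (x, μ(·|x))` under the `X`-marginal. -/
noncomputable def infoMeasure {X Y : Type*} [MeasurableSpace X]
    [MeasurableSpace Y] [TopologicalSpace Y] [PolishSpace Y] [BorelSpace Y] [Nonempty Y]
    (μ : Measure (X × Y)) [IsFiniteMeasure μ] : Measure (X × ProbabilityMeasure Y) :=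
  (μ.map Prod.fst).map (fun x => (x, ⟨μ.condKernel x, inferInstance⟩))

section Scheffe

variable {ι α : Type*} {l : Filter α}

theorem tendsto_tsum_abs_sub_of_hasSum {a : α → ι → ℝ} {a₀ : ι → ℝ} {m : ℝ}
    (ha : ∀ n i, 0 ≤ a n i) (hsum : ∀ n, HasSum (a n) m) (hsum₀ : HasSum a₀ m)
    (hlim : ∀ i, Tendsto (a · i) l (𝓝 (a₀ i))) :
    Tendsto (fun n => ∑' i, |a n i - a₀ i|) l (𝓝 0) := by
  set p : α → ι → ℝ := fun n i => max (a₀ i - a n i) 0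
  have hp_nonneg : ∀ n i, 0 ≤ p n i := fun n i => le_max_right _ _
  have hp_le : ∀ n i, p n i ≤ |a₀ i| := fun n i =>
    max_le (by linarith [ha n i, le_abs_self (a₀ i)]) (abs_nonneg _)
  -- `|t| = 2 t⁺ - t` and the two sums have the same mass, so only the positive parts remain.
  have habs : ∀ n, ∑' i, |a n i - a₀ i| = 2 * ∑' i, p n i := by
    intro n
    have hp : Summable (p n) :=
      hsum₀.summable.abs.of_nonneg_of_le (hp_nonneg n) (hp_le n)
    have h := (hp.hasSum.mul_left 2).sub (hsum₀.sub (hsum n))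
    rw [sub_self, sub_zero] at h
    refine (tsum_congr fun i => ?_).trans h.tsum_eq
    rcases abs_cases (a n i - a₀ i) with h₁ | h₁ <;>
      rcases max_cases (a₀ i - a n i) 0 with h₂ | h₂ <;> linarith [h₁.1, h₂.1]
  have hp : Tendsto (fun n => ∑' i, p n i) l (𝓝 0) := by
    have hlim_p : ∀ i, Tendsto (p · i) l (𝓝 0) := fun i => by
      simpa using ((hlim i).const_sub (a₀ i)).max (tendsto_const_nhds (x := (0 : ℝ)))
    simpa using tendsto_tsum_of_dominated_convergence hsum₀.summable.abs hlim_p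
      (Eventually.of_forall fun n i => by
        rw [Real.norm_of_nonneg (hp_nonneg n i)]; exact hp_le n i)
  simpa [habs] using hp.const_mul 2

theorem tendsto_tsum_mul_of_tendsto_tsum_abs_sub {a F : α → ι → ℝ} {a₀ F₀ : ι → ℝ} {C : ℝ}
    (hsum : ∀ n, Summable (a n)) (hsum₀ : Summable a₀)
    (hl1 : Tendsto (fun n => ∑' i, |a n i - a₀ i|) l (𝓝 0))
    (hF : ∀ n i, ‖F n i‖ ≤ C) (hFlim : ∀ i, a₀ i ≠ 0 → Tendsto (F · i) l (𝓝 (F₀ i))) :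
    Tendsto (fun n => ∑' i, a n i * F n i) l (𝓝 (∑' i, a₀ i * F₀ i)) := by
  have hdiff : ∀ n, HasSum (fun i => |a n i - a₀ i| * C) ((∑' i, |a n i - a₀ i|) * C) :=
    fun n => ((hsum n).sub hsum₀).abs.hasSum.mul_right C
  have hdiff_le : ∀ n i, ‖(a n i - a₀ i) * F n i‖ ≤ |a n i - a₀ i| * C := fun n i => by
    rw [norm_mul, Real.norm_eq_abs]; exact mul_le_mul_of_nonneg_left (hF n i) (abs_nonneg _)
  have hmain_le : ∀ n i, ‖a₀ i * F n i‖ ≤ |a₀ i| * C := fun n i => by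
    rw [norm_mul, Real.norm_eq_abs]; exact mul_le_mul_of_nonneg_left (hF n i) (abs_nonneg _)
  have herr : Tendsto (fun n => ∑' i, (a n i - a₀ i) * F n i) l (𝓝 0) :=
    squeeze_zero_norm (fun n => tsum_of_norm_bounded (hdiff n) (hdiff_le n))
      (by simpa using hl1.mul_const C)
  have hmain : Tendsto (fun n => ∑' i, a₀ i * F n i) l (𝓝 (∑' i, a₀ i * F₀ i)) := by
    refine tendsto_tsum_of_dominated_convergence (hsum₀.abs.mul_right C) (fun i => ?_)
      (Eventually.of_forall hmain_le)
    rcases eq_or_ne (a₀ i) 0 with h | h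
    · simpa [h] using tendsto_const_nhds
    · exact (hFlim i h).const_mul _
  rw [← zero_add (∑' i, a₀ i * F₀ i)]
  refine (herr.add hmain).congr fun n => ?_
  rw [← Summable.tsum_add]
  · exact tsum_congr fun i => by ring
  · exact .of_norm_bounded (hdiff n).summable (hdiff_le n)
  · exact .of_norm_bounded (hsum₀.abs.mul_right C) (hmain_le n)

end Scheffe

theorem hasSum_measureReal_singleton {α : Type*} [MeasurableSpace α] [MeasurableSingletonClass α]
    [Countable α] (ν : Measure α) [IsFiniteMeasure ν] :
    HasSum (fun a => ν.real {a}) (ν.real Set.univ) := by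
  have h : ∑' a, ν {a} = ν Set.univ := by
    simpa using ν.tsum_indicator_apply_singleton Set.univ MeasurableSet.univ
  have := ENNReal.hasSum_toReal (h ▸ measure_ne_top ν Set.univ)
  rwa [← ENNReal.tsum_toReal_eq fun _ => measure_ne_top ν _, h] at this

theorem tendsto_tsum_measureReal_mul {ι α : Type*} [MeasurableSpace α]
    [MeasurableSingletonClass α] [Countable α] {l : Filter ι} {ν : ι → Measure α} {ν₀ : Measure α}
    [∀ n, IsProbabilityMeasure (ν n)] [IsProbabilityMeasure ν₀] {F : ι → α → ℝ} {F₀ : α → ℝ}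
    {C : ℝ} (hν : ∀ a, Tendsto (fun n => (ν n).real {a}) l (𝓝 (ν₀.real {a})))
    (hF : ∀ n a, ‖F n a‖ ≤ C) (hFlim : ∀ a, ν₀ {a} ≠ 0 → Tendsto (F · a) l (𝓝 (F₀ a))) :
    Tendsto (fun n => ∑' a, (ν n).real {a} * F n a) l (𝓝 (∑' a, ν₀.real {a} * F₀ a)) := by
  have hsum : ∀ ν : Measure α, [IsProbabilityMeasure ν] → HasSum (fun a => ν.real {a}) 1 :=
    fun ν _ => by simpa using hasSum_measureReal_singleton ν
  refine tendsto_tsum_mul_of_tendsto_tsum_abs_sub (fun n => (hsum (ν n)).summable)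
    (hsum ν₀).summable ?_ hF fun a ha => hFlim a fun h => ha (by simp [measureReal_def, h])
  exact tendsto_tsum_abs_sub_of_hasSum (fun _ _ => measureReal_nonneg) (fun n => hsum (ν n))
    (hsum ν₀) hν

theorem ProbabilityMeasure.tendsto_of_tendsto_measureReal_singleton {ι Ω : Type*}
    [MeasurableSpace Ω] [TopologicalSpace Ω] [DiscreteTopology Ω] [OpensMeasurableSpace Ω]
    [Countable Ω] {l : Filter ι} {P : ι → ProbabilityMeasure Ω} {P₀ : ProbabilityMeasure Ω}
    (hP : ∀ ω, Tendsto (fun n => (P n : Measure Ω).real {ω}) l (𝓝 ((P₀ : Measure Ω).real {ω}))) :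
    Tendsto P l (𝓝 P₀) := by
  rw [ProbabilityMeasure.tendsto_iff_forall_integral_tendsto]
  intro g
  simp only [integral_countable (g.integrable _), smul_eq_mul]
  exact tendsto_tsum_measureReal_mul hP (fun _ => g.norm_coe_le_norm) fun _ _ => tendsto_const_nhds

theorem WeakTendsto.tendsto_measureReal {Ω : Type*} [MeasurableSpace Ω] [TopologicalSpace Ω]
    [DiscreteTopology Ω] {μ : ℕ → Measure Ω} {μ₀ : Measure Ω} (h : WeakTendsto μ μ₀)
    {s : Set Ω} (hs : MeasurableSet s) :
    Tendsto (fun n => (μ n).real s) atTop (𝓝 (μ₀.real s)) := by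
  classical
  let indicator : Ω →ᵇ ℝ := .mkOfDiscrete (s.indicator 1) 1 fun x y => by
    by_cases hx : x ∈ s <;> by_cases hy : y ∈ s <;> simp [hx, hy]
  simpa [indicator, integral_indicator_one hs] using h indicator

section Disintegration

variable {ι X Y : Type*} [MeasurableSpace X] [MeasurableSpace Y] {l : Filter ι}
  {μ : ι → Measure (X × Y)} {μ₀ : Measure (X × Y)}

theorem tendsto_fst_measureReal
    (hμ : ∀ s, MeasurableSet s → Tendsto (fun n => (μ n).real s) l (𝓝 (μ₀.real s)))
    {s : Set X} (hs : MeasurableSet s) :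
    Tendsto (fun n => (μ n).fst.real s) l (𝓝 (μ₀.fst.real s)) := by
  simpa only [measureReal_def, Measure.fst_apply hs] using hμ _ (measurable_fst hs)

variable [MeasurableSingletonClass X] [StandardBorelSpace Y] [Nonempty Y]

theorem measureReal_condKernel_of_ne_zero (ρ : Measure (X × Y)) [IsFiniteMeasure ρ] {x : X}
    (hx : ρ.fst {x} ≠ 0) (s : Set Y) :
    (ρ.condKernel x).real s = ρ.real ({x} ×ˢ s) / ρ.fst.real {x} := by
  rw [measureReal_def, Measure.condKernel_apply_of_ne_zero hx, ENNReal.toReal_mul,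
    ENNReal.toReal_inv, div_eq_inv_mul, measureReal_def, measureReal_def]

theorem tendsto_measureReal_condKernel [∀ n, IsFiniteMeasure (μ n)] [IsFiniteMeasure μ₀]
    (hμ : ∀ s, MeasurableSet s → Tendsto (fun n => (μ n).real s) l (𝓝 (μ₀.real s)))
    {x : X} (hx : μ₀.fst {x} ≠ 0) {s : Set Y} (hs : MeasurableSet s) :
    Tendsto (fun n => ((μ n).condKernel x).real s) l (𝓝 ((μ₀.condKernel x).real s)) := by
  have hfst := tendsto_fst_measureReal hμ (measurableSet_singleton x)
  have hx' : μ₀.fst.real {x} ≠ 0 := (measureReal_ne_zero_iff).2 hx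
  have hpos : ∀ᶠ n in l, (μ n).fst {x} ≠ 0 :=
    (hfst.eventually_ne hx').mono fun n hn h => hn (by simp [measureReal_def, h])
  rw [measureReal_condKernel_of_ne_zero μ₀ hx]
  refine ((hμ _ ((measurableSet_singleton x).prod hs)).div hfst hx').congr' ?_
  filter_upwards [hpos] with n hn using (measureReal_condKernel_of_ne_zero (μ n) hn s).symm

theorem tendsto_condKernel [TopologicalSpace Y] [DiscreteTopology Y] [OpensMeasurableSpace Y]
    [Countable Y] [∀ n, IsFiniteMeasure (μ n)] [IsFiniteMeasure μ₀]
    (hμ : ∀ s, MeasurableSet s → Tendsto (fun n => (μ n).real s) l (𝓝 (μ₀.real s)))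
    {x : X} (hx : μ₀.fst {x} ≠ 0) :
    Tendsto (fun n => (⟨(μ n).condKernel x, inferInstance⟩ : ProbabilityMeasure Y)) l
      (@nhds (ProbabilityMeasure Y) _ ⟨μ₀.condKernel x, inferInstance⟩) :=
  ProbabilityMeasure.tendsto_of_tendsto_measureReal_singleton fun y =>
    tendsto_measureReal_condKernel hμ hx (measurableSet_singleton y)

end Disintegration

instance Measure.instMeasurableSingletonClass {α : Type*} [MeasurableSpace α]
    [MeasurableSingletonClass α] [Countable α] : MeasurableSingletonClass (Measure α) where
  measurableSet_singleton ν := by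
    have h : {ν} = ⋂ a : α, (fun m : Measure α => m {a}) ⁻¹' {ν {a}} := by
      ext m
      simp [Measure.ext_iff_singleton]
    rw [h]
    exact .iInter fun a =>
      Measure.measurable_coe (measurableSet_singleton a) (measurableSet_singleton _)

instance ProbabilityMeasure.instMeasurableSingletonClass {α : Type*} [MeasurableSpace α]
    [MeasurableSingletonClass α] [Countable α] : MeasurableSingletonClass (ProbabilityMeasure α) :=
  inferInstanceAs (MeasurableSingletonClass {μ : Measure α // IsProbabilityMeasure μ})

theorem integral_infoMeasure {X Y : Type*} [MeasurableSpace X] [MeasurableSingletonClass X]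
    [Countable X] [MeasurableSpace Y] [TopologicalSpace Y] [PolishSpace Y] [BorelSpace Y]
    [Countable Y] [Nonempty Y] (μ : Measure (X × Y)) [IsFiniteMeasure μ]
    {f : X × ProbabilityMeasure Y → ℝ} {C : ℝ} (hf : ∀ p, ‖f p‖ ≤ C) :
    ∫ p, f p ∂(infoMeasure μ) = ∑' x, μ.fst.real {x} * f (x, ⟨μ.condKernel x, inferInstance⟩) := by
  set T : X → X × ProbabilityMeasure Y := fun x => (x, ⟨μ.condKernel x, inferInstance⟩)
  -- `infoMeasure μ` is a countable sum of atoms, so no measurability of `f` is needed.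
  have hinfo : infoMeasure μ = Measure.sum fun x => μ.fst {x} • Measure.dirac (T x) := by
    rw [infoMeasure, ← Measure.fst]
    conv_lhs => rw [← μ.fst.sum_smul_dirac]
    rw [Measure.map_sum (measurable_of_countable T).aemeasurable]
    simp only [Measure.map_smul, Measure.map_dirac' (measurable_of_countable T)]
  rw [hinfo, integral_sum_dirac_eq_tsum (fun _ => measure_ne_top _ _)]
  · rfl
  refine ((hasSum_measureReal_singleton μ.fst).summable.mul_right C).of_nonneg_of_le
    (fun _ => by positivity) fun x => ?_
  exact mul_le_mul_of_nonneg_left (hf (T x)) ENNReal.toReal_nonneg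

theorem stmt16 {X Y : Type*}
    [MeasurableSpace X] [TopologicalSpace X] [DiscreteTopology X] [Countable X] [BorelSpace X]
    [MeasurableSpace Y] [TopologicalSpace Y] [DiscreteTopology Y] [Countable Y] [BorelSpace Y]
    [Nonempty Y]
    (μ : ℕ → Measure (X × Y)) (μ₀ : Measure (X × Y))
    [∀ n, IsProbabilityMeasure (μ n)] [IsProbabilityMeasure μ₀]
    (hweak : WeakTendsto μ μ₀) :
    WeakTendsto (fun n => infoMeasure (μ n)) (infoMeasure μ₀) := by
  intro f
  have hset : ∀ s, MeasurableSet s → Tendsto (fun n => (μ n).real s) atTop (𝓝 (μ₀.real s)) :=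
    fun _ => hweak.tendsto_measureReal
  simp only [integral_infoMeasure _ f.norm_coe_le_norm]
  refine tendsto_tsum_measureReal_mul
    (fun x => tendsto_fst_measureReal hset (measurableSet_singleton x))
    (fun _ _ => f.norm_coe_le_norm _) fun x hx => ?_
  exact (f.continuous.tendsto _).comp (tendsto_const_nhds.prodMk_nhds (tendsto_condKernel hset hx))
end

section
/- There exist Polish spaces A, B, C, probability measures μ_n on A × B × C converging weakly to μ₀, such that for every n, B and C are conditionally independent given A under μ_n, yet B and C are not conditionally independent given A under μ₀. Concretely: with A = ℝ, B = {−1, 1}, C = ℝ, h_n(b) = b(1 + 1/n), μ_n given by μ_n^B = (1/2)δ_{−1} + (1/2)δ_1, μ_n(da|b) = (1/2)δ_{h_n(b)+1} + (1/2)δ_{h_n(b)−1}, μ_n(dc|b) = δ_{h_n(b)}, and μ₀ the analogous measure with h(b) = b: then μ_n → μ₀ weakly, each μ_n satisfies μ_n(db|a,c) = μ_n(db|a), but μ₀(db|a,c) = δ_c(db) ≠ μ₀(db|a) on a set of positive μ₀-measure. -/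
/-!
Take `h(b) = (1 + ε) b`. In the limit `ε = 0` the atoms `(0, 1, 1)` and `(0, -1, -1)`, of mass `1/4`
each, share the first coordinate while `(0, 1, -1)` and `(0, -1, 1)` carry no mass, so given `a = 0`
the coordinates `b` and `c` are perfectly correlated and the factorisation of `μ₀({0} × t × u)`
demanded by conditional independence fails. For `ε > 0` the four values of `a` are distinct and
`b = sign a`, `c = (1 + ε) b` are functions of `a`, which makes conditional independence trivial.
The atoms move continuously with `ε`, giving weak convergence.
-/

open MeasureTheory ProbabilityTheory Filter Topology BoundedContinuousFunction

/-- For a measure `λ` on `A × B × C` (coordinates `(a, b, c)`), the second and third coordinates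
are conditionally independent given the first: there are Markov kernels `κB`, `κC` (regular
conditional distributions of `b` and of `c` given `a`) such that
`λ(s × t × u) = ∫_s κB a t · κC a u d λ^A`. -/
def CondIndepGivenFst {A B C : Type*} [MeasurableSpace A] [MeasurableSpace B]
    [MeasurableSpace C] (lam : Measure (A × B × C)) : Prop :=
  ∃ (κB : Kernel A B) (κC : Kernel A C), IsMarkovKernel κB ∧ IsMarkovKernel κC ∧
    ∀ s t u : Set _, MeasurableSet s → MeasurableSet t → MeasurableSet u →
      lam (s ×ˢ t ×ˢ u) = ∫⁻ a in s, κB a t * κC a u ∂(lam.map Prod.fst)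

section General

variable {A B C : Type*} [MeasurableSpace A] [MeasurableSpace B] [MeasurableSpace C]

theorem condIndepGivenFst_map_graph (ν : Measure A) {f : A → B} {g : A → C}
    (hf : Measurable f) (hg : Measurable g) :
    CondIndepGivenFst (ν.map fun a => (a, f a, g a)) := by
  have hgraph : Measurable fun a => (a, f a, g a) := measurable_id.prodMk (hf.prodMk hg)
  refine ⟨Kernel.deterministic f hf, Kernel.deterministic g hg, inferInstance, inferInstance,
    fun s t u hs ht hu => ?_⟩
  have hfst : (ν.map fun a => (a, f a, g a)).map Prod.fst = ν := by
    rw [Measure.map_map measurable_fst hgraph]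
    exact Measure.map_id
  have hpre : (fun a => (a, f a, g a)) ⁻¹' (s ×ˢ t ×ˢ u) = s ∩ (f ⁻¹' t ∩ g ⁻¹' u) := by
    ext a; simp
  have hind : ∀ a, Kernel.deterministic f hf a t * Kernel.deterministic g hg a u
      = (f ⁻¹' t ∩ g ⁻¹' u).indicator 1 a := by
    intro a
    simp only [Kernel.deterministic_apply, Measure.dirac_apply' _ ht, Measure.dirac_apply' _ hu,
      ← Set.indicator_comp_right, Set.inter_indicator_one]
    rfl
  rw [hfst, Measure.map_apply hgraph (hs.prod (ht.prod hu)), hpre]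
  simp only [hind]
  rw [lintegral_indicator_one ((hf ht).inter (hg hu)), Measure.restrict_apply
    ((hf ht).inter (hg hu)), Set.inter_comm]

theorem CondIndepGivenFst.measure_singleton_prod_mul_swap [MeasurableSingletonClass A]
    {μ : Measure (A × B × C)} (hμ : CondIndepGivenFst μ) (a : A) {t t' : Set B} {u u' : Set C}
    (ht : MeasurableSet t) (ht' : MeasurableSet t') (hu : MeasurableSet u)
    (hu' : MeasurableSet u') :
    μ ({a} ×ˢ t ×ˢ u) * μ ({a} ×ˢ t' ×ˢ u') = μ ({a} ×ˢ t ×ˢ u') * μ ({a} ×ˢ t' ×ˢ u) := by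
  obtain ⟨κB, κC, -, -, h⟩ := hμ
  have hs := MeasurableSet.singleton a
  simp only [h _ _ _ hs ht hu, h _ _ _ hs ht' hu', h _ _ _ hs ht hu', h _ _ _ hs ht' hu,
    lintegral_singleton]
  ring

theorem weakTendsto_map_of_tendsto {Ω E : Type*} [MeasurableSpace Ω] [MeasurableSpace E]
    [TopologicalSpace E] [OpensMeasurableSpace E] (P : Measure Ω) [IsFiniteMeasure P]
    {φ : ℕ → Ω → E} {φ₀ : Ω → E} (hφ : ∀ n, Measurable (φ n)) (hφ₀ : Measurable φ₀)
    (hlim : ∀ ω, Tendsto (fun n => φ n ω) atTop (𝓝 (φ₀ ω))) :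
    WeakTendsto (fun n => P.map (φ n)) (P.map φ₀) := by
  intro f
  have hf := f.continuous.measurable
  simp only [integral_map (hφ _).aemeasurable hf.aestronglyMeasurable,
    integral_map hφ₀.aemeasurable hf.aestronglyMeasurable]
  refine tendsto_integral_of_dominated_convergence (fun _ => ‖f‖)
    (fun n => (hf.comp (hφ n)).aestronglyMeasurable) (integrable_const _)
    (fun n => Eventually.of_forall fun ω => f.norm_coe_le_norm _) ?_
  exact Eventually.of_forall fun ω => (f.continuous.tendsto _).comp (hlim ω)

end General

noncomputable section

def spin : Bool → ℝ
  | true => 1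
  | false => -1

/-- The outcome `(b, σ)` of two fair ±1 coins is sent to `(a, b, c) = (h b + σ, b, h b)`. -/
def coinModel (ε : ℝ) (ω : Bool × Bool) : ℝ × ℝ × ℝ :=
  ((1 + ε) * spin ω.1 + spin ω.2, spin ω.1, (1 + ε) * spin ω.1)

def coinMeasure (ε : ℝ) : Measure (ℝ × ℝ × ℝ) :=
  (PMF.uniformOfFintype (Bool × Bool)).toMeasure.map (coinModel ε)

instance (ε : ℝ) : IsProbabilityMeasure (coinMeasure ε) :=
  Measure.isProbabilityMeasure_map (measurable_of_finite _).aemeasurable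

theorem coinMeasure_apply (ε : ℝ) {S : Set (ℝ × ℝ × ℝ)} (hS : MeasurableSet S) :
    coinMeasure ε S = 4⁻¹ * ∑ ω, S.indicator 1 (coinModel ε ω) := by
  rw [coinMeasure, Measure.map_apply (measurable_of_finite _) hS, PMF.toMeasure_apply_fintype,
    Finset.mul_sum]
  refine Finset.sum_congr rfl fun ω _ => ?_
  by_cases hω : coinModel ε ω ∈ S
  · simp [Set.indicator_of_mem, hω, PMF.uniformOfFintype_apply]
  · simp [Set.indicator_of_notMem, hω]

theorem weakTendsto_coinMeasure :
    WeakTendsto (fun n : ℕ => coinMeasure (1 / (n + 1))) (coinMeasure 0) := by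
  refine weakTendsto_map_of_tendsto _ (fun _ => measurable_of_finite _) (measurable_of_finite _)
    fun ω => ?_
  have hcont : Continuous fun ε => coinModel ε ω := by unfold coinModel; fun_prop
  exact (hcont.tendsto 0).comp tendsto_one_div_add_atTop_nhds_zero_nat

theorem condIndepGivenFst_coinMeasure {ε : ℝ} (hε : 0 < ε) :
    CondIndepGivenFst (coinMeasure ε) := by
  let f : ℝ → ℝ := fun a => if 0 < a then 1 else -1
  have hf : Measurable f := Measurable.ite measurableSet_Ioi measurable_const measurable_const
  have hsign : ∀ x y, f ((1 + ε) * spin x + spin y) = spin x := by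
    intro x y
    cases x <;> cases y <;> simp only [f, spin] <;> split_ifs <;> linarith
  have hmodel : coinModel ε = (fun a => (a, f a, (1 + ε) * f a)) ∘ fun ω => (coinModel ε ω).1 := by
    funext ω
    simp only [coinModel, Function.comp, hsign]
  rw [coinMeasure, hmodel, ← Measure.map_map (by fun_prop) (measurable_of_finite _)]
  exact condIndepGivenFst_map_graph _ hf (measurable_const.mul hf)

theorem not_condIndepGivenFst_coinMeasure_zero : ¬ CondIndepGivenFst (coinMeasure 0) := by
  intro h
  have key := h.measure_singleton_prod_mul_swap 0 (measurableSet_singleton 1)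
    (measurableSet_singleton (-1)) (measurableSet_singleton 1) (measurableSet_singleton (-1))
  have hm : ∀ b c : ℝ, MeasurableSet ({0} ×ˢ {b} ×ˢ {c} : Set (ℝ × ℝ × ℝ)) := fun _ _ =>
    (measurableSet_singleton _).prod ((measurableSet_singleton _).prod (measurableSet_singleton _))
  simp only [coinMeasure_apply _ (hm _ _), Fintype.sum_prod_type, Fintype.sum_bool, coinModel,
    spin] at key
  norm_num [Set.indicator_apply] at key

end

/-- There is a weak-* convergent sequence of probability measures, each satisfying conditional
independence of the second and third coordinates given the first, whose limit does not. -/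
theorem stmt19 :
    ∃ (μ : ℕ → Measure (ℝ × ℝ × ℝ)) (μ₀ : Measure (ℝ × ℝ × ℝ)),
      (∀ n, IsProbabilityMeasure (μ n)) ∧ IsProbabilityMeasure μ₀ ∧
      WeakTendsto μ μ₀ ∧
      (∀ n, CondIndepGivenFst (μ n)) ∧
      ¬ CondIndepGivenFst μ₀ :=
  ⟨fun n => coinMeasure (1 / (n + 1)), coinMeasure 0, fun _ => inferInstance, inferInstance,
    weakTendsto_coinMeasure, fun _ => condIndepGivenFst_coinMeasure (by positivity),
    not_condIndepGivenFst_coinMeasure_zero⟩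
end
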